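/- arXiv:0910.1251 — 3 statements merged into one kernel-verified Lean document; each statement's English description precedes it below -/
import Mathlib

section
/- If the generalized Bochner curvature tensor of R vanishes, B* = 0, then for every unit vector X ∈ V one has R(X,JX,JX,X) = (4/(m+2)) S*(X,X) − τ*/((m+1)(m+2)). -/
open RealInnerProductSpace
open scoped BigOperators

noncomputable section

/-- A (curried) 4-linear form on `V`. -/
abbrev Tensor4 (V : Type*) [NormedAddCommGroup V] [InnerProductSpace ℝ V] :=
  V →ₗ[ℝ] V →ₗ[ℝ] V →ₗ[ℝ] V →ₗ[ℝ] ℝ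

variable {V : Type*} [NormedAddCommGroup V] [InnerProductSpace ℝ V]

/-- `J` is an orthogonal complex structure: `J ∘ J = -id` and `g(JX, JY) = g(X, Y)`. -/
def OrthJ (J : V →ₗ[ℝ] V) : Prop :=
  (∀ X : V, J (J X) = -X) ∧ (∀ X Y : V, ⟪J X, J Y⟫ = ⟪X, Y⟫)

/-- `R` is a curvature-like tensor. -/
def CurvatureLike (R : Tensor4 V) : Prop :=
  (∀ X Y Z U : V, R X Y Z U = - R Y X Z U) ∧
  (∀ X Y Z U : V, R X Y Z U = - R X Y U Z) ∧
  (∀ X Y Z U : V, R X Y Z U = R Z U X Y) ∧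
  (∀ X Y Z U : V, R X Y Z U + R Y Z X U + R Z X Y U = 0)

/-- `R` is an RK-tensor: `R(X,Y,Z,U) = R(JX,JY,JZ,JU)`. -/
def IsRK (J : V →ₗ[ℝ] V) (R : Tensor4 V) : Prop :=
  ∀ X Y Z U : V, R X Y Z U = R (J X) (J Y) (J Z) (J U)

/-- The tensor `R*` associated to `R` and `J`. -/
def Rstar (J : V →ₗ[ℝ] V) (R : Tensor4 V) (X Y Z U : V) : ℝ :=
  (3 / 16) * (R X Y Z U + R X Y (J Z) (J U) + R (J X) (J Y) Z U +
      R (J X) (J Y) (J Z) (J U)) +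
  (1 / 16) * (R (J X) (J Z) Y U - R (J Y) (J Z) X U + R X Z (J Y) (J U) -
      R Y Z (J X) (J U) + R Y (J Z) (J X) U - R X (J Z) (J Y) U +
      R (J Y) Z X (J U) - R (J X) Z Y (J U))

variable {ι : Type*} [Fintype ι]

/-- The Ricci form `S(X,Y) = Σᵢ R(X,Eᵢ,Eᵢ,Y)`. -/
def ric (b : OrthonormalBasis ι ℝ V) (R : Tensor4 V) (X Y : V) : ℝ :=
  ∑ i, R X (b i) (b i) Y

/-- `S'(X,Y) = Σᵢ R(X,Eᵢ,JEᵢ,JY)`. -/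
def ric' (J : V →ₗ[ℝ] V) (b : OrthonormalBasis ι ℝ V) (R : Tensor4 V) (X Y : V) : ℝ :=
  ∑ i, R X (b i) (J (b i)) (J Y)

/-- `S*(X,Y) = Σᵢ R*(X,Eᵢ,Eᵢ,Y)`. -/
def ricStar (J : V →ₗ[ℝ] V) (b : OrthonormalBasis ι ℝ V) (R : Tensor4 V) (X Y : V) : ℝ :=
  ∑ i, Rstar J R X (b i) (b i) Y

/-- The scalar curvature `τ = Σᵢ S(Eᵢ,Eᵢ)`. -/
def scal (b : OrthonormalBasis ι ℝ V) (R : Tensor4 V) : ℝ :=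
  ∑ i, ric b R (b i) (b i)

/-- `τ' = Σᵢ S'(Eᵢ,Eᵢ)`. -/
def scal' (J : V →ₗ[ℝ] V) (b : OrthonormalBasis ι ℝ V) (R : Tensor4 V) : ℝ :=
  ∑ i, ric' J b R (b i) (b i)

/-- `τ* = Σᵢ S*(Eᵢ,Eᵢ)`. -/
def scalStar (J : V →ₗ[ℝ] V) (b : OrthonormalBasis ι ℝ V) (R : Tensor4 V) : ℝ :=
  ∑ i, ricStar J b R (b i) (b i)

/-- The operator `φ` applied to a bilinear form `Q`. -/
def phi (Q : V → V → ℝ) (X Y Z U : V) : ℝ :=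
  ⟪X, U⟫ * Q Y Z - ⟪X, Z⟫ * Q Y U + ⟪Y, Z⟫ * Q X U - ⟪Y, U⟫ * Q X Z

/-- The operator `ψ` applied to a bilinear form `Q`. -/
def psi (J : V →ₗ[ℝ] V) (Q : V → V → ℝ) (X Y Z U : V) : ℝ :=
  ⟪X, J U⟫ * Q Y (J Z) - ⟪X, J Z⟫ * Q Y (J U) - 2 * ⟪X, J Y⟫ * Q Z (J U) +
  ⟪Y, J Z⟫ * Q X (J U) - ⟪Y, J U⟫ * Q X (J Z) - 2 * ⟪Z, J U⟫ * Q X (J Y)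

/-- `π₁(X,Y,Z,U) = g(X,U)g(Y,Z) − g(X,Z)g(Y,U)`. -/
def pi1 (X Y Z U : V) : ℝ :=
  ⟪X, U⟫ * ⟪Y, Z⟫ - ⟪X, Z⟫ * ⟪Y, U⟫

/-- `π₂(X,Y,Z,U) = g(X,JU)g(Y,JZ) − g(X,JZ)g(Y,JU) − 2g(X,JY)g(Z,JU)`. -/
def pi2 (J : V →ₗ[ℝ] V) (X Y Z U : V) : ℝ :=
  ⟪X, J U⟫ * ⟪Y, J Z⟫ - ⟪X, J Z⟫ * ⟪Y, J U⟫ - 2 * ⟪X, J Y⟫ * ⟪Z, J U⟫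

/-- The generalized Bochner curvature tensor `B*`. -/
def Bstar (m : ℕ) (J : V →ₗ[ℝ] V) (b : OrthonormalBasis ι ℝ V) (R : Tensor4 V)
    (X Y Z U : V) : ℝ :=
  Rstar J R X Y Z U
    - (1 / (2 * ((m : ℝ) + 2))) *
        (phi (ricStar J b R) X Y Z U + psi J (ricStar J b R) X Y Z U)
    + (scalStar J b R / (4 * ((m : ℝ) + 1) * ((m : ℝ) + 2))) *
        (pi1 X Y Z U + pi2 J X Y Z U)

/-- The Bochner curvature tensor `B` of an RK-tensor. -/
def Bochner (m : ℕ) (J : V →ₗ[ℝ] V) (b : OrthonormalBasis ι ℝ V) (R : Tensor4 V)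
    (X Y Z U : V) : ℝ :=
  R X Y Z U
    - (1 / (8 * ((m : ℝ) + 2))) *
        (phi (fun x y => ric b R x y + 3 * ric' J b R x y) X Y Z U +
         psi J (fun x y => ric b R x y + 3 * ric' J b R x y) X Y Z U)
    - (1 / (8 * ((m : ℝ) - 2))) *
        (3 * phi (fun x y => ric b R x y - ric' J b R x y) X Y Z U -
         psi J (fun x y => ric b R x y - ric' J b R x y) X Y Z U)
    + ((scal b R + 3 * scal' J b R) / (16 * ((m : ℝ) + 1) * ((m : ℝ) + 2))) *
        (pi1 X Y Z U + pi2 J X Y Z U)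
    + ((scal b R - scal' J b R) / (16 * ((m : ℝ) - 1) * ((m : ℝ) - 2))) *
        (3 * pi1 X Y Z U - pi2 J X Y Z U)

/-! Evaluate `B* = 0` at `(X, JX, JX, X)` for a unit vector `X`. As `⟪X, JX⟫ = 0`, there
`φ(S*) + ψ(S*) = 8 S*(X,X)` and `π₁ + π₂ = 4`, using `S*(JX,JX) = S*(X,X)`: `R*` is `J`-invariant and
`J` carries an orthonormal basis to an orthonormal basis, which does not change the trace. The
skew-symmetries of `R` reduce `R*(X,JX,JX,X)` to `R(X,JX,JX,X)`. -/

theorem OrthonormalBasis.sum_bilin_diag_eq {κ : Type*} [Fintype κ]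
    (b : OrthonormalBasis ι ℝ V) (e : OrthonormalBasis κ ℝ V) (f : V →ₗ[ℝ] V →ₗ[ℝ] ℝ) :
    ∑ i, f (e i) (e i) = ∑ k, f (b k) (b k) :=
  calc ∑ i, f (e i) (e i) = ∑ i, ∑ k, ⟪b k, e i⟫ * f (e i) (b k) := by
        refine Finset.sum_congr rfl fun i _ => ?_
        have h : f (e i) (e i) = f (e i) (∑ k, ⟪b k, e i⟫ • b k) := by rw [b.sum_repr']
        simp only [h, map_sum, map_smul, smul_eq_mul]
    _ = ∑ k, ∑ i, ⟪e i, b k⟫ * f (e i) (b k) := by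
        rw [Finset.sum_comm]
        simp only [real_inner_comm]
    _ = ∑ k, f (b k) (b k) := by
        refine Finset.sum_congr rfl fun k _ => ?_
        have h : f (b k) (b k) = f (∑ i, ⟪e i, b k⟫ • e i) (b k) := by rw [e.sum_repr']
        simp only [h, map_sum, map_smul, LinearMap.sum_apply,
          LinearMap.smul_apply, smul_eq_mul]

theorem Tensor4.apply_neg (R : Tensor4 V) (X Y Z U : V) : R (-X) Y Z U = -R X Y Z U := by
  rw [← neg_one_smul ℝ X, map_smul]
  simp only [LinearMap.smul_apply, smul_eq_mul, neg_one_mul]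

namespace OrthJ

variable {J : V →ₗ[ℝ] V}

theorem inner_apply_left (hJ : OrthJ J) (X Y : V) : ⟪J X, Y⟫ = -⟪X, J Y⟫ := by
  rw [← hJ.2, hJ.1, inner_neg_left]

theorem inner_self_apply_eq_zero (hJ : OrthJ J) (X : V) : ⟪X, J X⟫ = 0 := by
  have h := hJ.inner_apply_left X X
  rw [real_inner_comm] at h
  linarith

def linearIsometryEquiv (hJ : OrthJ J) : V ≃ₗᵢ[ℝ] V :=
  (LinearEquiv.ofLinearMap J (-J) (by ext; simp [hJ.1]) (by ext; simp [hJ.1])).isometryOfInner hJ.2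

@[simp]
theorem linearIsometryEquiv_apply (hJ : OrthJ J) (X : V) : hJ.linearIsometryEquiv X = J X := rfl

theorem pi1_add_pi2_holSec (hJ : OrthJ J) {X : V} (hX : ‖X‖ = 1) :
    pi1 X (J X) (J X) X + pi2 J X (J X) (J X) X = 4 := by
  have hXX : ⟪X, X⟫ = 1 := by rw [real_inner_self_eq_norm_sq, hX]; norm_num
  simp only [pi1, pi2, hJ.1, hJ.2, inner_neg_right, hJ.inner_self_apply_eq_zero, hXX,
    real_inner_comm X (J X)]
  norm_num

theorem phi_add_psi_holSec (hJ : OrthJ J) {X : V} (hX : ‖X‖ = 1) (Q : V → V → ℝ)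
    (hQJ : Q (J X) (J X) = Q X X) (hQneg : Q X (-X) = -Q X X) :
    phi Q X (J X) (J X) X + psi J Q X (J X) (J X) X = 8 * Q X X := by
  have hXX : ⟪X, X⟫ = 1 := by rw [real_inner_self_eq_norm_sq, hX]; norm_num
  simp only [phi, psi, hJ.1, hJ.2, inner_neg_right, hJ.inner_self_apply_eq_zero, hXX,
    real_inner_comm X (J X), hQJ, hQneg]
  ring

end OrthJ

variable {J : V →ₗ[ℝ] V}

theorem Rstar_apply_J (hJ : OrthJ J) (R : Tensor4 V) (X Y Z U : V) :
    Rstar J R (J X) (J Y) (J Z) (J U) = Rstar J R X Y Z U := by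
  simp only [Rstar, hJ.1, Tensor4.apply_neg, map_neg, LinearMap.neg_apply, neg_neg]
  ring

theorem Rstar_neg_neg (R : Tensor4 V) (X Y Z U : V) :
    Rstar J R (-X) Y Z (-U) = Rstar J R X Y Z U := by
  simp only [Rstar, Tensor4.apply_neg, map_neg, LinearMap.neg_apply, neg_neg]

theorem Rstar_holSec (hJ : OrthJ J) {R : Tensor4 V} (hR : CurvatureLike R) (X : V) :
    Rstar J R X (J X) (J X) X = R X (J X) (J X) X := by
  obtain ⟨hskew₁₂, hskew₃₄, -, -⟩ := hR
  have hXXXX : R X X X X = 0 := by linarith [hskew₁₂ X X X X]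
  have hJXJXJXJX : R (J X) (J X) (J X) (J X) = 0 := by linarith [hskew₁₂ (J X) (J X) (J X) (J X)]
  simp only [Rstar, hJ.1, Tensor4.apply_neg, map_neg, LinearMap.neg_apply, neg_neg]
  linarith [hskew₃₄ X (J X) X (J X), hskew₁₂ (J X) X (J X) X, hskew₁₂ (J X) X X (J X)]

def RstarBilin (J : V →ₗ[ℝ] V) (R : Tensor4 V) (X : V) : V →ₗ[ℝ] V →ₗ[ℝ] ℝ :=
  LinearMap.mk₂ ℝ (fun Y Z => Rstar J R X Y Z X)
    (fun _ _ _ => by simp only [Rstar, map_add, LinearMap.add_apply]; ring)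
    (fun _ _ _ => by simp only [Rstar, map_smul, LinearMap.smul_apply, smul_eq_mul]; ring)
    (fun _ _ _ => by simp only [Rstar, map_add, LinearMap.add_apply]; ring)
    (fun _ _ _ => by simp only [Rstar, map_smul, LinearMap.smul_apply, smul_eq_mul]; ring)

theorem ricStar_neg_right (b : OrthonormalBasis ι ℝ V) (R : Tensor4 V) (X Y : V) :
    ricStar J b R X (-Y) = -ricStar J b R X Y := by
  simp only [ricStar, Rstar, map_neg, ← Finset.sum_neg_distrib]
  exact Finset.sum_congr rfl fun _ _ => by ring

theorem ricStar_apply_J_apply_J (hJ : OrthJ J) (b : OrthonormalBasis ι ℝ V) (R : Tensor4 V)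
    (X : V) : ricStar J b R (J X) (J X) = ricStar J b R X X :=
  calc ricStar J b R (J X) (J X) = ∑ i, RstarBilin J R X (J (b i)) (J (b i)) :=
        Finset.sum_congr rfl fun i _ => by
          rw [RstarBilin, LinearMap.mk₂_apply, ← Rstar_apply_J hJ, hJ.1, Rstar_neg_neg]
    _ = ∑ i, RstarBilin J R X (b i) (b i) := by
        simpa using b.sum_bilin_diag_eq (b.map hJ.linearIsometryEquiv) (RstarBilin J R X)
    _ = ricStar J b R X X := rfl

theorem holSec_of_Bstar_eq_zero_general {V : Type*} [NormedAddCommGroup V] [InnerProductSpace ℝ V]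
    {m : ℕ}
    (J : V →ₗ[ℝ] V) (hJ : OrthJ J) (R : Tensor4 V) (hR : CurvatureLike R)
    (b : OrthonormalBasis (Fin (2 * m)) ℝ V)
    (hB : ∀ X Y Z U : V, Bstar m J b R X Y Z U = 0) :
    ∀ X : V, ‖X‖ = 1 →
      R X (J X) (J X) X =
        (4 / ((m : ℝ) + 2)) * ricStar J b R X X -
          scalStar J b R / (((m : ℝ) + 1) * ((m : ℝ) + 2)) := by
  intro X hX
  have key := hB X (J X) (J X) X
  rw [Bstar, hJ.phi_add_psi_holSec hX _ (ricStar_apply_J_apply_J hJ b R X)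
    (ricStar_neg_right b R X X), hJ.pi1_add_pi2_holSec hX, Rstar_holSec hJ hR] at key
  field_simp at key ⊢
  linarith

/-- if `B* = 0` then for unit `X`,
`R(X,JX,JX,X) = (4/(m+2)) S*(X,X) − τ*/((m+1)(m+2))`. -/
theorem holSec_of_Bstar_eq_zero {V : Type*} [NormedAddCommGroup V] [InnerProductSpace ℝ V]
    [FiniteDimensional ℝ V] {m : ℕ} (hm : 1 ≤ m) (hdim : Module.finrank ℝ V = 2 * m)
    (J : V →ₗ[ℝ] V) (hJ : OrthJ J) (R : Tensor4 V) (hR : CurvatureLike R)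
    (b : OrthonormalBasis (Fin (2 * m)) ℝ V)
    (hB : ∀ X Y Z U : V, Bstar m J b R X Y Z U = 0) :
    ∀ X : V, ‖X‖ = 1 →
      R X (J X) (J X) X =
        (4 / ((m : ℝ) + 2)) * ricStar J b R X X -
          scalStar J b R / (((m : ℝ) + 1) * ((m : ℝ) + 2)) :=
  holSec_of_Bstar_eq_zero_general J hJ R hR b hB
end
end

section
/- (Theorem 2.1, pointwise form.) Suppose R is of product type with respect to the orthogonal J-invariant decomposition V = V₁ ⊕ V₂. Then the generalized Bochner curvature tensor of R vanishes, B* = 0, if and only if there exists μ ∈ ℝ such that R(X,JX,JX,X) = μ·g(X,X)² for all X ∈ V₁ and R(X,JX,JX,X) = −μ·g(X,X)² for all X ∈ V₂ (i.e., V₁ has constant holomorphic sectional curvature μ and V₂ has constant holomorphic sectional curvature −μ). -/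
open RealInnerProductSpace
open scoped BigOperators

noncomputable section

variable {V : Type*} [NormedAddCommGroup V] [InnerProductSpace ℝ V]

variable {ι : Type*} [Fintype ι]

/-- `R` is of product type with respect to the decomposition `V = V₁ ⊕ V₂`. -/
def ProductType2 {V : Type*} [NormedAddCommGroup V] [InnerProductSpace ℝ V]
    (V₁ V₂ : Submodule ℝ V) (R : Tensor4 V) : Prop :=
  ∀ X Y Z U : V, (X ∈ V₁ ∨ X ∈ V₂) → (Y ∈ V₁ ∨ Y ∈ V₂) →
    (Z ∈ V₁ ∨ Z ∈ V₂) → (U ∈ V₁ ∨ U ∈ V₂) →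
    (X ∈ V₁ ∨ Y ∈ V₁ ∨ Z ∈ V₁ ∨ U ∈ V₁) → (X ∈ V₂ ∨ Y ∈ V₂ ∨ Z ∈ V₂ ∨ U ∈ V₂) →
    R X Y Z U = 0

/-!
`R*` is a Kähler curvature tensor: it satisfies the identities of a curvature-like tensor
together with `R*(X, Y, JZ, JU) = R*(X, Y, Z, U)`, and `R*(X, JX, JX, X) = R(X, JX, JX, X)`.
For `R` of product type, `R*` also vanishes on mixed arguments.

If `B* = 0`, evaluating `B*` at `(x, y, y, x)` with `x ∈ V₁`, `y ∈ V₂` separates variables: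
`S*(x, x) = λ₁ g(x, x)` on `V₁` and `S*(y, y) = λ₂ g(y, y)` on `V₂`, with
`2(m + 1)(λ₁ + λ₂) = τ*`. Evaluating `B*` at `(X, JX, JX, X)` then gives the holomorphic
sectional curvatures `μ` on `V₁` and `-μ` on `V₂`.

Conversely, a Kähler curvature tensor is determined by its holomorphic sectional curvature, so
`R* = μ/4 (π₁ + π₂)(g₁) - μ/4 (π₁ + π₂)(g₂)`, where `gᵢ` is the metric of `Vᵢ` pulled back
by the orthogonal projection. The traces of `gᵢ` are `dim Vᵢ`, which gives `S*` and `τ*`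
explicitly, and `B*` vanishes identically.
-/

/-- Additivity is required only in the first argument; the symmetries give it in the others. -/
structure IsKaehlerCurvature (J : V →ₗ[ℝ] V) (T : V → V → V → V → ℝ) : Prop where
  add_left : ∀ X X' Y Z U, T (X + X') Y Z U = T X Y Z U + T X' Y Z U
  antisymm_left : ∀ X Y Z U, T Y X Z U = -T X Y Z U
  antisymm_right : ∀ X Y Z U, T X Y U Z = -T X Y Z U
  pair_symm : ∀ X Y Z U, T Z U X Y = T X Y Z U
  bianchi : ∀ X Y Z U, T X Y Z U + T Y Z X U + T Z X Y U = 0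
  J_right : ∀ X Y Z U, T X Y (J Z) (J U) = T X Y Z U

namespace IsKaehlerCurvature

variable {J : V →ₗ[ℝ] V} {T T' : V → V → V → V → ℝ}

lemma lincomb (hT : IsKaehlerCurvature J T) (hT' : IsKaehlerCurvature J T') (a a' : ℝ) :
    IsKaehlerCurvature J fun X Y Z U => a * T X Y Z U + a' * T' X Y Z U where
  add_left X X' Y Z U := by simp only [hT.add_left, hT'.add_left]; ring
  antisymm_left X Y Z U := by rw [hT.antisymm_left, hT'.antisymm_left]; ring
  antisymm_right X Y Z U := by rw [hT.antisymm_right, hT'.antisymm_right]; ring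
  pair_symm X Y Z U := by rw [hT.pair_symm, hT'.pair_symm]
  bianchi X Y Z U := by linear_combination a * hT.bianchi X Y Z U + a' * hT'.bianchi X Y Z U
  J_right X Y Z U := by simp only [hT.J_right, hT'.J_right]

lemma add_second (hT : IsKaehlerCurvature J T) (X Y Y' Z U : V) :
    T X (Y + Y') Z U = T X Y Z U + T X Y' Z U := by
  have h := hT.antisymm_left X (Y + Y') Z U
  rw [hT.add_left] at h
  linarith [hT.antisymm_left X Y Z U, hT.antisymm_left X Y' Z U]

lemma add_third (hT : IsKaehlerCurvature J T) (X Y Z Z' U : V) :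
    T X Y (Z + Z') U = T X Y Z U + T X Y Z' U := by
  rw [← hT.pair_symm, hT.add_left, hT.pair_symm, hT.pair_symm X Y]

lemma add_fourth (hT : IsKaehlerCurvature J T) (X Y Z U U' : V) :
    T X Y Z (U + U') = T X Y Z U + T X Y Z U' := by
  rw [← hT.pair_symm, hT.add_second, hT.pair_symm, hT.pair_symm X Y]

lemma neg_left (hT : IsKaehlerCurvature J T) (X Y Z U : V) : T (-X) Y Z U = -T X Y Z U := by
  have h := hT.add_left X (-X) Y Z U
  have h₀ := hT.add_left 0 0 Y Z U
  simp only [add_neg_cancel, add_zero] at h h₀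
  linarith

lemma neg_second (hT : IsKaehlerCurvature J T) (X Y Z U : V) : T X (-Y) Z U = -T X Y Z U := by
  have h := hT.antisymm_left X (-Y) Z U
  rw [hT.neg_left] at h
  linarith [hT.antisymm_left X Y Z U]

lemma neg_third (hT : IsKaehlerCurvature J T) (X Y Z U : V) : T X Y (-Z) U = -T X Y Z U := by
  rw [← hT.pair_symm, hT.neg_left, hT.pair_symm]

lemma neg_fourth (hT : IsKaehlerCurvature J T) (X Y Z U : V) : T X Y Z (-U) = -T X Y Z U := by
  rw [← hT.pair_symm, hT.neg_second, hT.pair_symm]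

lemma J_left (hT : IsKaehlerCurvature J T) (X Y Z U : V) : T (J X) (J Y) Z U = T X Y Z U := by
  rw [← hT.pair_symm, hT.J_right, hT.pair_symm]

lemma J_swap (hJJ : ∀ X, J (J X) = -X) (hT : IsKaehlerCurvature J T) (X Y Z U : V) :
    T X (J Y) Z U = T Y (J X) Z U := by
  have h := hT.J_left X (J Y) Z U
  rw [hJJ, hT.neg_second] at h
  linarith [hT.antisymm_left (J X) Y Z U]

lemma holo_polarize₁ (hJJ : ∀ X, J (J X) = -X) (hT : IsKaehlerCurvature J T)
    (hH : ∀ X, T X (J X) (J X) X = 0) (X Y : V) : T X (J X) (J X) Y = 0 := by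
  have hsymm (X Y : V) : T X (J X) (J X) Y + T Y (J Y) (J Y) X = 0 := by
    have hadd := hH (X + Y)
    have hsub := hH (X + -Y)
    simp only [map_add, map_neg, hT.add_left, hT.add_second, hT.add_third, hT.add_fourth,
      hT.neg_left, hT.neg_second, hT.neg_third, hT.neg_fourth] at hadd hsub
    grind [hT.antisymm_left, hT.antisymm_right, hT.pair_symm, hT.J_right, hT.J_swap hJJ]
  have h₂ := hsymm X (Y + Y)
  simp only [map_add, hT.add_left, hT.add_second, hT.add_third, hT.add_fourth] at h₂
  linarith [hsymm X Y]

lemma holo_polarize₂ (hJJ : ∀ X, J (J X) = -X) (hT : IsKaehlerCurvature J T)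
    (hH : ∀ X, T X (J X) (J X) X = 0) (X Z Y : V) :
    2 * T Z (J X) (J X) Y + T X (J X) (J Z) Y = 0 := by
  have hadd := hT.holo_polarize₁ hJJ hH (X + Z) Y
  have hsub := hT.holo_polarize₁ hJJ hH (X + -Z) Y
  simp only [map_add, map_neg, hT.add_left, hT.add_second, hT.add_third,
    hT.neg_left, hT.neg_second, hT.neg_third] at hadd hsub
  grind [hT.holo_polarize₁ hJJ hH, hT.J_swap hJJ]

lemma holo_polarize₃ (hJJ : ∀ X, J (J X) = -X) (hT : IsKaehlerCurvature J T)
    (hH : ∀ X, T X (J X) (J X) X = 0) (W X Z Y : V) :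
    T Z (J W) (J X) Y + T Z (J X) (J W) Y + T W (J X) (J Z) Y = 0 := by
  have h := hT.holo_polarize₂ hJJ hH (X + W) Z Y
  simp only [map_add, hT.add_left, hT.add_second, hT.add_third] at h
  grind [hT.holo_polarize₂ hJJ hH, hT.J_swap hJJ]

lemma three_mul_apply_J_J (hJJ : ∀ X, J (J X) = -X) (hT : IsKaehlerCurvature J T)
    (hH : ∀ X, T X (J X) (J X) X = 0) (W X Z U : V) :
    3 * T W (J X) (J Z) U = T X W Z U - 2 * T X Z W U := by
  have h := hT.holo_polarize₃ hJJ hH W X Z U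
  have hb₁ := hT.bianchi W (J Z) (J X) U
  have hb₂ := hT.bianchi X (J Z) (J W) U
  have hj₁ := hT.J_left Z X W U
  have hj₂ := hT.J_left Z W X U
  grind [hT.antisymm_left, hT.bianchi, hT.J_swap hJJ]

lemma eq_two_mul_swap (hJJ : ∀ X, J (J X) = -X) (hT : IsKaehlerCurvature J T)
    (hH : ∀ X, T X (J X) (J X) X = 0) (X Z W U : V) : T X Z W U = 2 * T X W Z U := by
  have h := hT.three_mul_apply_J_J hJJ hH W X Z U
  have hJ := hT.three_mul_apply_J_J hJJ hH W (J X) (J Z) U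
  rw [hJJ, hJJ, hT.neg_second, hT.neg_third, neg_neg] at hJ
  grind [hT.antisymm_left, hT.J_left]

theorem eq_of_holo_eq (hJJ : ∀ X, J (J X) = -X) (hT : IsKaehlerCurvature J T)
    (hT' : IsKaehlerCurvature J T') (h : ∀ X, T X (J X) (J X) X = T' X (J X) (J X) X)
    (X Y Z U : V) : T X Y Z U = T' X Y Z U := by
  have hD := hT.lincomb hT' 1 (-1)
  have hH (X : V) : 1 * T X (J X) (J X) X + -1 * T' X (J X) (J X) X = 0 := by rw [h]; ring
  -- Swapping the two middle arguments twice multiplies the difference `T - T'` by `4`.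
  linear_combination (-1/3 : ℝ) * hD.eq_two_mul_swap hJJ hH X Y Z U -
    (2/3 : ℝ) * hD.eq_two_mul_swap hJJ hH X Z Y U

end IsKaehlerCurvature

section Rstar

variable {J : V →ₗ[ℝ] V} {R : Tensor4 V}

theorem isKaehlerCurvature_Rstar (hJJ : ∀ X, J (J X) = -X) (hR : CurvatureLike R) :
    IsKaehlerCurvature J (Rstar J R) := by
  obtain ⟨hsk₁, hsk₂, hpair, hbianchi⟩ := hR
  constructor <;> intros <;>
    simp only [Rstar, map_add, LinearMap.add_apply, hJJ, map_neg, LinearMap.neg_apply] <;>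
    grind

lemma Rstar_holo (hJJ : ∀ X, J (J X) = -X) (hR : CurvatureLike R) (X : V) :
    Rstar J R X (J X) (J X) X = R X (J X) (J X) X := by
  obtain ⟨hsk₁, hsk₂, hpair, hbianchi⟩ := hR
  simp only [Rstar, hJJ, map_neg, LinearMap.neg_apply]
  grind

end Rstar

namespace ProductType2

variable {J : V →ₗ[ℝ] V} {R : Tensor4 V} {V₁ V₂ : Submodule ℝ V}

lemma apply_add (hprod : ProductType2 V₁ V₂ R) {x₁ y₁ z₁ u₁ x₂ y₂ z₂ u₂ : V}
    (hx₁ : x₁ ∈ V₁) (hy₁ : y₁ ∈ V₁) (hz₁ : z₁ ∈ V₁) (hu₁ : u₁ ∈ V₁)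
    (hx₂ : x₂ ∈ V₂) (hy₂ : y₂ ∈ V₂) (hz₂ : z₂ ∈ V₂) (hu₂ : u₂ ∈ V₂) :
    R (x₁ + x₂) (y₁ + y₂) (z₁ + z₂) (u₁ + u₂) = R x₁ y₁ z₁ u₁ + R x₂ y₂ z₂ u₂ := by
  unfold ProductType2 at hprod
  simp (disch := simp only [*, true_or, or_true]) only [map_add, LinearMap.add_apply, hprod]
  ring

lemma Rstar_apply_mixed (hprod : ProductType2 V₁ V₂ R) (hJ₁ : ∀ x ∈ V₁, J x ∈ V₁)
    (hJ₂ : ∀ x ∈ V₂, J x ∈ V₂) {x y : V} (hx : x ∈ V₁) (hy : y ∈ V₂) :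
    Rstar J R x y y x = 0 := by
  have hJx := hJ₁ x hx
  have hJy := hJ₂ y hy
  unfold ProductType2 at hprod
  simp (disch := simp only [*, true_or, or_true]) only [Rstar, hprod]
  norm_num

end ProductType2

namespace OrthJ

variable {J : V →ₗ[ℝ] V}

lemma inner_J_left (hJ : OrthJ J) (x y : V) : ⟪J x, y⟫ = -⟪x, J y⟫ := by
  rw [← hJ.2 x (J y), hJ.1, inner_neg_right, neg_neg]

lemma inner_self_J (hJ : OrthJ J) (x : V) : ⟪x, J x⟫ = 0 := by
  linarith [hJ.inner_J_left x x, real_inner_comm x (J x)]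

lemma inner_J_self (hJ : OrthJ J) (x : V) : ⟪J x, x⟫ = 0 := by
  rw [real_inner_comm, hJ.inner_self_J]

end OrthJ

structure IsHermitianForm (J : V →ₗ[ℝ] V) (h : V → V → ℝ) : Prop where
  add_left : ∀ x x' y, h (x + x') y = h x y + h x' y
  symm : ∀ x y, h x y = h y x
  J_left : ∀ x y, h (J x) y = -h x (J y)

/-- `π₁ + π₂` with the metric `g` replaced by the form `h`. -/
def pi12 (J : V →ₗ[ℝ] V) (h : V → V → ℝ) (X Y Z U : V) : ℝ :=
  h X U * h Y Z - h X Z * h Y U +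
    (h X (J U) * h Y (J Z) - h X (J Z) * h Y (J U) - 2 * h X (J Y) * h Z (J U))

namespace IsHermitianForm

variable {J : V →ₗ[ℝ] V} {h : V → V → ℝ}

lemma neg_right (hh : IsHermitianForm J h) (x y : V) : h x (-y) = -h x y := by
  have h₀ := hh.add_left y (-y) x
  rw [add_neg_cancel, ← hh.symm, ← hh.symm x, ← hh.symm x] at h₀
  have h₁ := hh.add_left 0 0 x
  rw [add_zero] at h₁
  linarith [hh.symm 0 x]

lemma apply_J_J (hJJ : ∀ X, J (J X) = -X) (hh : IsHermitianForm J h) (x y : V) :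
    h (J x) (J y) = h x y := by
  rw [hh.J_left, hJJ, hh.neg_right, neg_neg]

lemma apply_self_J (hh : IsHermitianForm J h) (x : V) : h x (J x) = 0 := by
  linarith [hh.J_left x x, hh.symm (J x) x]

theorem isKaehlerCurvature_pi12 (hJJ : ∀ X, J (J X) = -X) (hh : IsHermitianForm J h) :
    IsKaehlerCurvature J (pi12 J h) := by
  have hs := hh.symm
  have hw := hh.J_left
  constructor <;> intros <;> simp only [pi12, hh.add_left, hJJ, hh.neg_right] <;> grind

lemma pi12_holo (hJJ : ∀ X, J (J X) = -X) (hh : IsHermitianForm J h) (X : V) :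
    pi12 J h X (J X) (J X) X = 4 * h X X ^ 2 := by
  simp only [pi12, hJJ, hh.neg_right, hh.apply_J_J hJJ, hh.apply_self_J]
  ring

lemma sum_pi12 (hJJ : ∀ X, J (J X) = -X) (hh : IsHermitianForm J h)
    (b : OrthonormalBasis ι ℝ V) (hb : ∀ x y, ∑ i, h x (b i) * h (b i) y = h x y) (x y : V) :
    ∑ i, pi12 J h x (b i) (b i) y = (∑ i, h (b i) (b i) + 2) * h x y := by
  have hterm (i : ι) : pi12 J h x (b i) (b i) y = h x y * h (b i) (b i) -
      h x (b i) * h (b i) y - 3 * (h x (J (b i)) * h (b i) (J y)) := by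
    rw [pi12, hh.apply_self_J]; ring
  have hJ : ∑ i, h x (J (b i)) * h (b i) (J y) = -h x y := by
    have hrot (i : ι) : h x (J (b i)) * h (b i) (J y) = -(h (J x) (b i) * h (b i) (J y)) := by
      rw [hh.J_left]; ring
    simp only [hrot, Finset.sum_neg_distrib, hb, hh.apply_J_J hJJ]
  simp only [hterm, Finset.sum_sub_distrib, ← Finset.mul_sum, hb, hJ]
  ring

end IsHermitianForm

def projForm (W : Submodule ℝ V) [W.HasOrthogonalProjection] (x y : V) : ℝ :=
  ⟪W.starProjection x, W.starProjection y⟫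

section projForm

variable {J : V →ₗ[ℝ] V} (W : Submodule ℝ V) [W.HasOrthogonalProjection]

lemma OrthJ.starProjection_J (hJ : OrthJ J) (hW : ∀ x ∈ W, J x ∈ W) (x : V) :
    W.starProjection (J x) = J (W.starProjection x) := by
  refine W.eq_starProjection_of_mem_of_inner_eq_zero (hW _ (W.starProjection_apply_mem x))
    fun w hw => ?_
  rw [← map_sub, hJ.inner_J_left, W.starProjection_inner_eq_zero x (J w) (hW w hw), neg_zero]

lemma OrthJ.isHermitianForm_projForm (hJ : OrthJ J) (hW : ∀ x ∈ W, J x ∈ W) :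
    IsHermitianForm J (projForm W) where
  add_left x x' y := by simp only [projForm, map_add, inner_add_left]
  symm x y := real_inner_comm _ _
  J_left x y := by simp only [projForm, hJ.starProjection_J W hW, hJ.inner_J_left]

lemma projForm_eq_inner (x y : V) : projForm W x y = ⟪x, W.starProjection y⟫ := by
  rw [projForm, W.inner_starProjection_left_eq_right,
    W.starProjection_eq_self_iff.mpr (W.starProjection_apply_mem y)]

lemma projForm_eq_inner' (x y : V) : projForm W x y = ⟪W.starProjection x, y⟫ := by
  rw [projForm_eq_inner, W.inner_starProjection_left_eq_right]

lemma sum_projForm_mul_projForm (b : OrthonormalBasis ι ℝ V) (x y : V) :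
    ∑ i, projForm W x (b i) * projForm W (b i) y = projForm W x y := by
  simp only [projForm_eq_inner' W x, projForm_eq_inner W (b _), b.sum_inner_mul_inner]
  exact projForm_eq_inner' W x y

lemma sum_projForm_self [FiniteDimensional ℝ V] (b : OrthonormalBasis ι ℝ V) :
    ∑ i, projForm W (b i) (b i) = Module.finrank ℝ W := by
  have hP : LinearMap.IsProj W (W.starProjection : V →ₗ[ℝ] V) :=
    ⟨W.starProjection_apply_mem, fun _ => W.starProjection_eq_self_iff.mpr⟩
  rw [← hP.trace, LinearMap.trace_eq_sum_inner _ b]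
  simp only [projForm_eq_inner, ContinuousLinearMap.coe_coe]

lemma inner_eq_projForm_add_projForm_orthogonal (x y : V) :
    ⟪x, y⟫ = projForm W x y + projForm Wᗮ x y := by
  rw [projForm_eq_inner, projForm_eq_inner, ← inner_add_right,
    W.starProjection_add_starProjection_orthogonal]

end projForm

lemma exists_eq_mul_of_add_eq {α : Type*} {s t : Set α} {p f : α → ℝ} {c : ℝ} {x₀ y₀ : α}
    (hx₀ : x₀ ∈ s) (hy₀ : y₀ ∈ t) (hpx₀ : p x₀ ≠ 0) (hpy₀ : p y₀ ≠ 0)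
    (h : ∀ x ∈ s, ∀ y ∈ t, p x * f y + p y * f x = c * (p x * p y)) :
    ∃ a, (∀ x ∈ s, f x = a * p x) ∧ ∀ y ∈ t, f y = (c - a) * p y := by
  refine ⟨c - f y₀ / p y₀, fun x hx => ?_, fun y hy => ?_⟩
  · field_simp
    linear_combination h x hx y₀ hy₀
  · rw [sub_sub_cancel]
    field_simp
    refine mul_left_cancel₀ hpx₀ ?_
    linear_combination p y₀ * h x₀ hx₀ y hy - p y * h x₀ hx₀ y₀ hy₀

section Necessity

variable {m : ℕ} {J : V →ₗ[ℝ] V} {R : Tensor4 V}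

lemma Bstar_holo (hJ : OrthJ J) (hR : CurvatureLike R) (b : OrthonormalBasis ι ℝ V) (X : V) :
    Bstar m J b R X (J X) (J X) X = R X (J X) (J X) X -
      2 * ⟪X, X⟫ / (m + 2) * (ricStar J b R X X + ricStar J b R (J X) (J X)) +
      scalStar J b R * ⟪X, X⟫ ^ 2 / ((m + 1) * (m + 2)) := by
  have hneg (x y : V) : ricStar J b R x (-y) = -ricStar J b R x y := by
    simp only [ricStar, (isKaehlerCurvature_Rstar hJ.1 hR).neg_fourth, Finset.sum_neg_distrib]
  simp only [Bstar, phi, psi, pi1, pi2, Rstar_holo hJ.1 hR, hJ.1, hJ.2, hneg, inner_neg_right,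
    hJ.inner_self_J, hJ.inner_J_self]
  field_simp
  ring

lemma Bstar_apply_orthogonal (hJ : OrthJ J) (b : OrthonormalBasis ι ℝ V) {x y : V}
    (hxy : ⟪x, y⟫ = 0) (hxJy : ⟪x, J y⟫ = 0) :
    Bstar m J b R x y y x = Rstar J R x y y x -
      (⟪x, x⟫ * ricStar J b R y y + ⟪y, y⟫ * ricStar J b R x x) / (2 * (m + 2)) +
      scalStar J b R * (⟪x, x⟫ * ⟪y, y⟫) / (4 * (m + 1) * (m + 2)) := by
  have hyx : ⟪y, x⟫ = 0 := by rw [real_inner_comm, hxy]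
  have hyJx : ⟪y, J x⟫ = 0 := by rw [real_inner_comm, hJ.inner_J_left, hxJy, neg_zero]
  simp only [Bstar, phi, psi, pi1, pi2, hxy, hyx, hxJy, hyJx, hJ.inner_self_J]
  field_simp
  ring

lemma holo_eq_of_Bstar_eq_zero (hJ : OrthJ J) (hR : CurvatureLike R)
    (b : OrthonormalBasis ι ℝ V) {X : V} {a : ℝ} (hB : Bstar m J b R X (J X) (J X) X = 0)
    (ha : ricStar J b R X X = a * ⟪X, X⟫) (haJ : ricStar J b R (J X) (J X) = a * ⟪J X, J X⟫) :
    R X (J X) (J X) X =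
      (4 * (m + 1) * a - scalStar J b R) / ((m + 1) * (m + 2)) * ⟪X, X⟫ ^ 2 := by
  rw [Bstar_holo hJ hR, ha, haJ, hJ.2] at hB
  field_simp at hB ⊢
  linear_combination hB

theorem exists_holo_of_Bstar_eq_zero (hJ : OrthJ J) (hR : CurvatureLike R)
    (b : OrthonormalBasis ι ℝ V) {V₁ V₂ : Submodule ℝ V}
    (horth : ∀ x ∈ V₁, ∀ y ∈ V₂, ⟪x, y⟫ = (0 : ℝ))
    (hJ₁ : ∀ x ∈ V₁, J x ∈ V₁) (hJ₂ : ∀ x ∈ V₂, J x ∈ V₂) (hprod : ProductType2 V₁ V₂ R)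
    (h₁ : V₁ ≠ ⊥) (h₂ : V₂ ≠ ⊥) (hB : ∀ X Y Z U : V, Bstar m J b R X Y Z U = 0) :
    ∃ μ : ℝ, (∀ X ∈ V₁, R X (J X) (J X) X = μ * ⟪X, X⟫ ^ 2) ∧
      ∀ X ∈ V₂, R X (J X) (J X) X = -μ * ⟪X, X⟫ ^ 2 := by
  obtain ⟨x₀, hx₀, hx₀_ne⟩ := Submodule.exists_mem_ne_zero_of_ne_bot h₁
  obtain ⟨y₀, hy₀, hy₀_ne⟩ := Submodule.exists_mem_ne_zero_of_ne_bot h₂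
  have hsep : ∀ x ∈ V₁, ∀ y ∈ V₂, ⟪x, x⟫ * ricStar J b R y y + ⟪y, y⟫ * ricStar J b R x x =
      scalStar J b R / (2 * (m + 1)) * (⟪x, x⟫ * ⟪y, y⟫) := by
    intro x hx y hy
    have h := hB x y y x
    rw [Bstar_apply_orthogonal hJ b (horth x hx y hy) (horth x hx (J y) (hJ₂ y hy)),
      hprod.Rstar_apply_mixed hJ₁ hJ₂ hx hy] at h
    field_simp at h ⊢
    linear_combination -h / 2
  obtain ⟨a, ha₁, ha₂⟩ := exists_eq_mul_of_add_eq (s := V₁) (t := V₂)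
    (p := fun x => ⟪x, x⟫) (f := fun x => ricStar J b R x x) hx₀ hy₀
    (inner_self_ne_zero.2 hx₀_ne) (inner_self_ne_zero.2 hy₀_ne) hsep
  refine ⟨(4 * (m + 1) * a - scalStar J b R) / ((m + 1) * (m + 2)), fun X hX => ?_,
    fun X hX => ?_⟩
  · exact holo_eq_of_Bstar_eq_zero hJ hR b (hB _ _ _ _) (ha₁ X hX) (ha₁ _ (hJ₁ X hX))
  · rw [holo_eq_of_Bstar_eq_zero hJ hR b (hB _ _ _ _) (ha₂ X hX) (ha₂ _ (hJ₂ X hX))]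
    field_simp
    ring

end Necessity

section Sufficiency

variable {m : ℕ} {J : V →ₗ[ℝ] V} {R : Tensor4 V} {W : Submodule ℝ V}
  [W.HasOrthogonalProjection]

lemma ProductType2.holo_eq (hJ₁ : ∀ x ∈ W, J x ∈ W) (hJ₂ : ∀ x ∈ Wᗮ, J x ∈ Wᗮ)
    (hprod : ProductType2 W Wᗮ R) {μ : ℝ}
    (hμ₁ : ∀ X ∈ W, R X (J X) (J X) X = μ * ⟪X, X⟫ ^ 2)
    (hμ₂ : ∀ X ∈ Wᗮ, R X (J X) (J X) X = -μ * ⟪X, X⟫ ^ 2) (X : V) :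
    R X (J X) (J X) X = μ * projForm W X X ^ 2 - μ * projForm Wᗮ X X ^ 2 := by
  have hx₁ := W.starProjection_apply_mem X
  have hx₂ := Wᗮ.starProjection_apply_mem X
  have h := hprod.apply_add hx₁ (hJ₁ _ hx₁) (hJ₁ _ hx₁) hx₁ hx₂ (hJ₂ _ hx₂) (hJ₂ _ hx₂) hx₂
  rw [← map_add, W.starProjection_add_starProjection_orthogonal] at h
  rw [h, hμ₁ _ hx₁, hμ₂ _ hx₂, projForm, projForm]
  ring

theorem Bstar_eq_zero_of_holo [FiniteDimensional ℝ V] (hdim : Module.finrank ℝ V = 2 * m)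
    (hJ : OrthJ J) (hR : CurvatureLike R) (b : OrthonormalBasis ι ℝ V)
    (hJ₁ : ∀ x ∈ W, J x ∈ W) (hJ₂ : ∀ x ∈ Wᗮ, J x ∈ Wᗮ) (hprod : ProductType2 W Wᗮ R) {μ : ℝ}
    (hμ₁ : ∀ X ∈ W, R X (J X) (J X) X = μ * ⟪X, X⟫ ^ 2)
    (hμ₂ : ∀ X ∈ Wᗮ, R X (J X) (J X) X = -μ * ⟪X, X⟫ ^ 2) (X Y Z U : V) :
    Bstar m J b R X Y Z U = 0 := by
  have hg₁ := hJ.isHermitianForm_projForm W hJ₁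
  have hg₂ := hJ.isHermitianForm_projForm Wᗮ hJ₂
  have hmodel : ∀ X Y Z U, Rstar J R X Y Z U =
      μ / 4 * pi12 J (projForm W) X Y Z U + -μ / 4 * pi12 J (projForm Wᗮ) X Y Z U :=
    (isKaehlerCurvature_Rstar hJ.1 hR).eq_of_holo_eq hJ.1
      ((hg₁.isKaehlerCurvature_pi12 hJ.1).lincomb (hg₂.isKaehlerCurvature_pi12 hJ.1) _ _)
      fun X => by
        rw [Rstar_holo hJ.1 hR, hprod.holo_eq hJ₁ hJ₂ hμ₁ hμ₂, hg₁.pi12_holo hJ.1,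
          hg₂.pi12_holo hJ.1]
        ring
  have hric (x y : V) : ricStar J b R x y =
      μ / 4 * ((Module.finrank ℝ W + 2) * projForm W x y) +
        -μ / 4 * ((Module.finrank ℝ Wᗮ + 2) * projForm Wᗮ x y) := by
    simp only [ricStar, hmodel, Finset.sum_add_distrib, ← Finset.mul_sum,
      hg₁.sum_pi12 hJ.1 b (sum_projForm_mul_projForm W b),
      hg₂.sum_pi12 hJ.1 b (sum_projForm_mul_projForm Wᗮ b), sum_projForm_self]
  have hscal : scalStar J b R =
      μ / 4 * ((Module.finrank ℝ W + 2) * Module.finrank ℝ W) +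
        -μ / 4 * ((Module.finrank ℝ Wᗮ + 2) * Module.finrank ℝ Wᗮ) := by
    simp only [scalStar, hric, Finset.sum_add_distrib, ← Finset.mul_sum, sum_projForm_self]
  have hm : (m : ℝ) = ((Module.finrank ℝ W : ℝ) + Module.finrank ℝ Wᗮ) / 2 := by
    rw [← Nat.cast_add, W.finrank_add_finrank_orthogonal, hdim]
    push_cast
    ring
  simp only [Bstar, phi, psi, pi1, pi2, hmodel, pi12, hric, hscal, hm,
    inner_eq_projForm_add_projForm_orthogonal W]
  field_simp
  ring

end Sufficiency

lemma eq_orthogonal_of_sup_eq_top {V₁ V₂ : Submodule ℝ V}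
    (horth : ∀ x ∈ V₁, ∀ y ∈ V₂, ⟪x, y⟫ = (0 : ℝ)) (hsup : V₁ ⊔ V₂ = ⊤) : V₂ = V₁ᗮ := by
  refine le_antisymm (fun y hy => (V₁.mem_orthogonal y).2 fun x hx => horth x hx y hy)
    fun w hw => ?_
  obtain ⟨x, hx, y, hy, rfl⟩ := Submodule.mem_sup.1 (hsup ▸ Submodule.mem_top : w ∈ V₁ ⊔ V₂)
  have hxx : ⟪x, x⟫ = 0 := by
    simpa only [inner_add_right, horth x hx y hy, add_zero] using (V₁.mem_orthogonal _).1 hw x hx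
  simpa [inner_self_eq_zero.1 hxx] using hy

theorem Bstar_eq_zero_iff_product_general {V : Type*} [NormedAddCommGroup V]
    [InnerProductSpace ℝ V] [FiniteDimensional ℝ V] {m k : ℕ}
    (hdim : Module.finrank ℝ V = 2 * m)
    (J : V →ₗ[ℝ] V) (hJ : OrthJ J) (R : Tensor4 V) (hR : CurvatureLike R)
    (b : OrthonormalBasis (Fin (2 * m)) ℝ V)
    (V₁ V₂ : Submodule ℝ V)
    (horth : ∀ x ∈ V₁, ∀ y ∈ V₂, ⟪x, y⟫ = (0 : ℝ))
    (hsup : V₁ ⊔ V₂ = ⊤)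
    (hJ1 : ∀ x ∈ V₁, J x ∈ V₁) (hJ2 : ∀ x ∈ V₂, J x ∈ V₂)
    (hk1 : 1 ≤ k) (hk2 : k < m)
    (hd1 : Module.finrank ℝ V₁ = 2 * k) (hd2 : Module.finrank ℝ V₂ = 2 * (m - k))
    (hprod : ProductType2 V₁ V₂ R) :
    (∀ X Y Z U : V, Bstar m J b R X Y Z U = 0) ↔
      ∃ μ : ℝ, (∀ X ∈ V₁, R X (J X) (J X) X = μ * ⟪X, X⟫ ^ 2) ∧
        (∀ X ∈ V₂, R X (J X) (J X) X = -μ * ⟪X, X⟫ ^ 2) := by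
  have hV₁ : V₁ ≠ ⊥ := by
    rintro rfl
    rw [finrank_bot] at hd1
    omega
  have hV₂ : V₂ ≠ ⊥ := by
    rintro rfl
    rw [finrank_bot] at hd2
    omega
  refine ⟨exists_holo_of_Bstar_eq_zero hJ hR b horth hJ1 hJ2 hprod hV₁ hV₂, ?_⟩
  rintro ⟨μ, hμ₁, hμ₂⟩
  obtain rfl : V₂ = V₁ᗮ := eq_orthogonal_of_sup_eq_top horth hsup
  exact Bstar_eq_zero_of_holo hdim hJ hR b hJ1 hJ2 hprod hμ₁ hμ₂

/-- Theorem 2.1, pointwise form. -/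
theorem Bstar_eq_zero_iff_product {V : Type*} [NormedAddCommGroup V]
    [InnerProductSpace ℝ V] [FiniteDimensional ℝ V] {m k : ℕ}
    (hm : 1 ≤ m) (hdim : Module.finrank ℝ V = 2 * m)
    (J : V →ₗ[ℝ] V) (hJ : OrthJ J) (R : Tensor4 V) (hR : CurvatureLike R)
    (b : OrthonormalBasis (Fin (2 * m)) ℝ V)
    (V₁ V₂ : Submodule ℝ V)
    (horth : ∀ x ∈ V₁, ∀ y ∈ V₂, ⟪x, y⟫ = (0 : ℝ))
    (hsup : V₁ ⊔ V₂ = ⊤)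
    (hJ1 : ∀ x ∈ V₁, J x ∈ V₁) (hJ2 : ∀ x ∈ V₂, J x ∈ V₂)
    (hk1 : 1 ≤ k) (hk2 : k < m)
    (hd1 : Module.finrank ℝ V₁ = 2 * k) (hd2 : Module.finrank ℝ V₂ = 2 * (m - k))
    (hprod : ProductType2 V₁ V₂ R) :
    (∀ X Y Z U : V, Bstar m J b R X Y Z U = 0) ↔
      ∃ μ : ℝ, (∀ X ∈ V₁, R X (J X) (J X) X = μ * ⟪X, X⟫ ^ 2) ∧
        (∀ X ∈ V₂, R X (J X) (J X) X = -μ * ⟪X, X⟫ ^ 2) :=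
  Bstar_eq_zero_iff_product_general hdim J hJ R hR b V₁ V₂ horth hsup hJ1 hJ2 hk1 hk2 hd1 hd2 hprod
end
end

section
/- Let R be an RK-tensor with m > 2 whose Bochner curvature tensor vanishes, B = 0, and suppose S = S'. Then R = (1/(2(m+2)))(φ+ψ)(S) − (τ/(4(m+1)(m+2)))(π₁+π₂), and consequently R satisfies the Kähler identity R(X,Y,Z,U) = R(X,Y,JZ,JU) for all X,Y,Z,U ∈ V. -/
open RealInnerProductSpace
open scoped BigOperators

noncomputable section

variable {V : Type*} [NormedAddCommGroup V] [InnerProductSpace ℝ V]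

variable {ι : Type*} [Fintype ι]

/-! Because `B = 0` and `S = S'` (hence `τ = τ'`), every term of `B` built from `S - S'` or
`τ - τ'` vanishes and the definition of `B` solves for `R`. The Kähler identity then follows
from the `J`-invariance of `S`, which comes from `R(X,Y,Z,U) = R(JX,JY,JZ,JU)` and the basis
independence of the trace: for `Q = S` and `Q = g`, `(φ + ψ)(Q)` satisfies the Kähler identity,
and `π₁ + π₂ = ½ (φ + ψ)(g)`. -/

theorem OrthonormalBasis.sum_apply_self_eq {κ : Type*} [Fintype κ] (b : OrthonormalBasis ι ℝ V)
    (b' : OrthonormalBasis κ ℝ V) (B : V →ₗ[ℝ] V →ₗ[ℝ] ℝ) :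
    ∑ i, B (b i) (b i) = ∑ j, B (b' j) (b' j) := by
  calc ∑ i, B (b i) (b i) = ∑ i, ∑ j, ⟪b' j, b i⟫ * B (b' j) (b i) := by
        refine Finset.sum_congr rfl fun i _ => ?_
        nth_rewrite 1 [← b'.sum_repr' (b i)]
        simp only [map_sum, map_smul, LinearMap.sum_apply, LinearMap.smul_apply, smul_eq_mul]
    _ = ∑ j, B (b' j) (∑ i, ⟪b i, b' j⟫ • b i) := by
        rw [Finset.sum_comm]
        simp [map_sum, map_smul, real_inner_comm]
    _ = ∑ j, B (b' j) (b' j) := by simp only [b.sum_repr']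

theorem ric_neg_right (b : OrthonormalBasis ι ℝ V) (R : Tensor4 V) (x y : V) :
    ric b R x (-y) = -ric b R x y := by
  simp [ric]

section

variable {J : V →ₗ[ℝ] V} {R : Tensor4 V} {b : OrthonormalBasis ι ℝ V}

theorem OrthJ.inner_map_left (hJ : OrthJ J) (x y : V) : ⟪J x, y⟫ = -⟪x, J y⟫ := by
  have h := hJ.2 x (J y)
  rw [hJ.1 y, inner_neg_right] at h
  linarith

def OrthJ.toLinearIsometryEquiv (hJ : OrthJ J) : V ≃ₗᵢ[ℝ] V :=
  (LinearEquiv.ofLinearMap J (-J) (by ext x; simp [hJ.1]) (by ext x; simp [hJ.1])).isometryOfInner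
    hJ.2

theorem ric_map_map (hJ : OrthJ J) (hRK : IsRK J R) (x y : V) :
    ric b R (J x) (J y) = ric b R x y := by
  calc ric b R (J x) (J y) = ∑ i, R x (J (b i)) (J (b i)) y := by
        refine Finset.sum_congr rfl fun i _ => ?_
        rw [hRK x, hJ.1]
        simp only [map_neg, LinearMap.neg_apply, neg_neg]
    _ = ∑ i, R x (b i) (b i) y :=
        (b.map hJ.toLinearIsometryEquiv).sum_apply_self_eq b ((R x).compr₂ (LinearMap.applyₗ y))

theorem ric_map_left (hJ : OrthJ J) (hRK : IsRK J R) (x y : V) :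
    ric b R (J x) y = -ric b R x (J y) := by
  have h := ric_map_map (b := b) hJ hRK x (J y)
  rw [hJ.1, ric_neg_right] at h
  linarith

theorem phi_add_psi_map_map (hJ : OrthJ J) {Q : V → V → ℝ}
    (hneg : ∀ x y, Q x (-y) = -Q x y) (hQ : ∀ x y, Q (J x) y = -Q x (J y)) (X Y Z U : V) :
    phi Q X Y (J Z) (J U) + psi J Q X Y (J Z) (J U) = phi Q X Y Z U + psi J Q X Y Z U := by
  simp only [phi, psi, hJ.1, map_neg, hJ.inner_map_left, hQ, hneg, inner_neg_right]
  ring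

theorem pi1_add_pi2_eq (X Y Z U : V) :
    pi1 X Y Z U + pi2 J X Y Z U =
      (phi (fun x y => ⟪x, y⟫) X Y Z U + psi J (fun x y => ⟪x, y⟫) X Y Z U) / 2 := by
  simp only [pi1, pi2, phi, psi]
  ring

theorem pi1_add_pi2_map_map (hJ : OrthJ J) (X Y Z U : V) :
    pi1 X Y (J Z) (J U) + pi2 J X Y (J Z) (J U) = pi1 X Y Z U + pi2 J X Y Z U := by
  rw [pi1_add_pi2_eq, pi1_add_pi2_eq,
    phi_add_psi_map_map hJ (fun _ _ => inner_neg_right ..) hJ.inner_map_left]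

theorem scal'_eq_scal_of_ric_eq_ric' (hSS' : ∀ X Y : V, ric b R X Y = ric' J b R X Y) :
    scal' J b R = scal b R := by
  simp [scal', scal, ← hSS']

theorem eq_of_bochner_eq_zero_of_ric_eq_ric' {m : ℕ}
    (hB : ∀ X Y Z U : V, Bochner m J b R X Y Z U = 0)
    (hSS' : ∀ X Y : V, ric b R X Y = ric' J b R X Y) (X Y Z U : V) :
    R X Y Z U =
      (1 / (2 * ((m : ℝ) + 2))) * (phi (ric b R) X Y Z U + psi J (ric b R) X Y Z U) -
        (scal b R / (4 * ((m : ℝ) + 1) * ((m : ℝ) + 2))) * (pi1 X Y Z U + pi2 J X Y Z U) := by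
  have h := hB X Y Z U
  simp only [Bochner, phi, psi, ← hSS', scal'_eq_scal_of_ric_eq_ric' hSS', div_eq_mul_inv,
    mul_inv] at h ⊢
  linear_combination h

end

theorem kaehler_identity_of_Bochner_eq_zero_general {V : Type*} [NormedAddCommGroup V]
    [InnerProductSpace ℝ V] {m : ℕ}
    (J : V →ₗ[ℝ] V) (hJ : OrthJ J) (R : Tensor4 V)
    (hRK : IsRK J R) (b : OrthonormalBasis (Fin (2 * m)) ℝ V)
    (hB : ∀ X Y Z U : V, Bochner m J b R X Y Z U = 0)
    (hSS' : ∀ X Y : V, ric b R X Y = ric' J b R X Y) :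
    (∀ X Y Z U : V,
      R X Y Z U =
        (1 / (2 * ((m : ℝ) + 2))) * (phi (ric b R) X Y Z U + psi J (ric b R) X Y Z U) -
          (scal b R / (4 * ((m : ℝ) + 1) * ((m : ℝ) + 2))) *
            (pi1 X Y Z U + pi2 J X Y Z U)) ∧
    (∀ X Y Z U : V, R X Y Z U = R X Y (J Z) (J U)) := by
  have hR := eq_of_bochner_eq_zero_of_ric_eq_ric' hB hSS'
  refine ⟨hR, fun X Y Z U => ?_⟩
  rw [hR X Y Z U, hR X Y (J Z) (J U), pi1_add_pi2_map_map hJ,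
    phi_add_psi_map_map hJ (ric_neg_right b R) (ric_map_left hJ hRK)]

/-- if `B = 0` and `S = S'` then `R` is expressed through `S` and
satisfies the Kähler identity. -/
theorem kaehler_identity_of_Bochner_eq_zero {V : Type*} [NormedAddCommGroup V]
    [InnerProductSpace ℝ V] [FiniteDimensional ℝ V] {m : ℕ}
    (hm : 2 < m) (hdim : Module.finrank ℝ V = 2 * m)
    (J : V →ₗ[ℝ] V) (hJ : OrthJ J) (R : Tensor4 V) (hR : CurvatureLike R)
    (hRK : IsRK J R) (b : OrthonormalBasis (Fin (2 * m)) ℝ V)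
    (hB : ∀ X Y Z U : V, Bochner m J b R X Y Z U = 0)
    (hSS' : ∀ X Y : V, ric b R X Y = ric' J b R X Y) :
    (∀ X Y Z U : V,
      R X Y Z U =
        (1 / (2 * ((m : ℝ) + 2))) * (phi (ric b R) X Y Z U + psi J (ric b R) X Y Z U) -
          (scal b R / (4 * ((m : ℝ) + 1) * ((m : ℝ) + 2))) *
            (pi1 X Y Z U + pi2 J X Y Z U)) ∧
    (∀ X Y Z U : V, R X Y Z U = R X Y (J Z) (J U)) :=
  kaehler_identity_of_Bochner_eq_zero_general J hJ R hRK b hB hSS'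
end
end
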